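/- Fix x ∈ (0,1). Then, as a → 0⁺, the integral ∫₀^π Im( ( e^{it}(1 − a e^{it})/(e^{it} − a) )^{1/4} · ((e^{it} + x)/(x e^{it} + 1))^{1/2} ) / √(1 − 2a·cos t + a²) dt converges to ∫₀^π Im( ((e^{it} + x)/(x e^{it} + 1))^{1/2} ) dt, where w^{1/4} and w^{1/2} denote the principal powers, defined via the principal branch of the argument in (−π, π]. -/

import Mathlib

/-! On the unit circle `(z + x) / (x z + 1)` and `z (1 - a z) / (z - a)` have modulus at most one
(numerator and denominator are conjugate up to the unimodular factor `z`), so for `0 < a < 1/2`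
the integrand is bounded by `1 / (1 - a) ≤ 2`. As `a → 0` the base `z (1 - a z) / (z - a)` tends
to `1`, away from the branch cut, and the square root to `1`; dominated convergence concludes. -/

open Complex Real Filter Topology

lemma norm_add_ofReal_eq_norm_ofReal_mul_add_one {z : ℂ} (hz : ‖z‖ = 1) (x : ℝ) :
    ‖z + x‖ = ‖x * z + 1‖ := by
  have hconj : (starRingEnd ℂ) z * (z + x) = (starRingEnd ℂ) (x * z + 1) := by
    rw [map_add, map_mul, conj_ofReal, map_one, mul_add, conj_mul', hz]
    push_cast
    ring
  rw [← RCLike.norm_conj (x * z + 1), ← hconj, norm_mul, RCLike.norm_conj, hz, one_mul]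

lemma norm_add_ofReal_div_ofReal_mul_add_one_le_one {z : ℂ} (hz : ‖z‖ = 1) (x : ℝ) :
    ‖(z + x) / (x * z + 1)‖ ≤ 1 := by
  rw [norm_div, norm_add_ofReal_eq_norm_ofReal_mul_add_one hz]
  exact div_self_le_one _

lemma norm_mul_one_sub_ofReal_mul_div_sub_ofReal_le_one {z : ℂ} (hz : ‖z‖ = 1) (a : ℝ) :
    ‖z * (1 - a * z) / (z - a)‖ ≤ 1 := by
  have h := norm_add_ofReal_eq_norm_ofReal_mul_add_one hz (-a)
  rw [mul_div_assoc, norm_mul, hz, one_mul, norm_div]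
  rw [show z + ((-a : ℝ) : ℂ) = z - a by push_cast; ring,
    show ((-a : ℝ) : ℂ) * z + 1 = 1 - a * z by push_cast; ring] at h
  rw [h]
  exact div_self_le_one _

lemma norm_cpow_le_one {w s : ℂ} (hw : ‖w‖ ≤ 1) (hs : 0 ≤ s.re) (hs' : s.im = 0) :
    ‖w ^ s‖ ≤ 1 := by
  refine (norm_cpow_le w s).trans ?_
  rw [hs', mul_zero, Real.exp_zero, div_one]
  exact Real.rpow_le_one (norm_nonneg w) hw hs

lemma one_sub_le_sqrt_one_sub_two_mul_cos_add_sq {a : ℝ} (ha : 0 ≤ a) (t : ℝ) :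
    1 - a ≤ √(1 - 2 * a * Real.cos t + a ^ 2) :=
  (le_abs_self _).trans <| Real.abs_le_sqrt <| by nlinarith [Real.cos_le_one t]

lemma tendsto_mul_one_sub_ofReal_mul_div_sub_ofReal_cpow {z : ℂ} (hz : z ≠ 0) (s : ℂ) :
    Tendsto (fun a : ℝ => (z * (1 - a * z) / (z - a)) ^ s) (𝓝 0) (𝓝 1) := by
  have hcont : ContinuousAt (fun a : ℝ => z * (1 - a * z) / (z - a)) 0 :=
    ContinuousAt.div (by fun_prop) (by fun_prop) (by simpa using hz)
  have hbase : Tendsto (fun a : ℝ => z * (1 - a * z) / (z - a)) (𝓝 0) (𝓝 1) := by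
    convert hcont.tendsto using 2
    simp [div_self hz]
  simpa only [one_cpow] using hbase.cpow (tendsto_const_nhds (x := s)) one_mem_slitPlane

theorem stmt_18_general (x : ℝ) :
    Filter.Tendsto (fun a : ℝ => ∫ t in (0:ℝ)..Real.pi,
        ((Complex.exp (Complex.I * t) * (1 - a * Complex.exp (Complex.I * t)) /
            (Complex.exp (Complex.I * t) - a)) ^ ((1:ℂ)/4) *
          ((Complex.exp (Complex.I * t) + x) /
            (x * Complex.exp (Complex.I * t) + 1)) ^ ((1:ℂ)/2)).im /
          Real.sqrt (1 - 2 * a * Real.cos t + a^2))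
      (𝓝[>] 0)
      (𝓝 (∫ t in (0:ℝ)..Real.pi,
        (((Complex.exp (Complex.I * t) + x) /
          (x * Complex.exp (Complex.I * t) + 1)) ^ ((1:ℂ)/2)).im)) := by
  have hz (t : ℝ) : ‖exp (I * t)‖ = 1 := by rw [mul_comm]; exact norm_exp_ofReal_mul_I t
  refine intervalIntegral.tendsto_integral_filter_of_dominated_convergence (fun _ => 2)
    (.of_forall fun a => (by fun_prop : Measurable _).aestronglyMeasurable) ?_
    intervalIntegrable_const ?_
  · filter_upwards [Ioo_mem_nhdsGT (by norm_num : (0:ℝ) < 1 / 2)] with a ⟨ha0, ha⟩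
    refine .of_forall fun t _ => ?_
    have hsqrt := one_sub_le_sqrt_one_sub_two_mul_cos_add_sq ha0.le t
    rw [norm_div, Real.norm_of_nonneg (sqrt_nonneg _), div_le_iff₀ (by linarith)]
    calc ‖(_ : ℂ).im‖ ≤ ‖_ * _‖ := abs_im_le_norm _
      _ ≤ 1 := by
        rw [norm_mul]
        exact mul_le_one₀
          (norm_cpow_le_one (norm_mul_one_sub_ofReal_mul_div_sub_ofReal_le_one (hz t) a)
            (by norm_num) (by simp))
          (norm_nonneg _)
          (norm_cpow_le_one (norm_add_ofReal_div_ofReal_mul_add_one_le_one (hz t) x)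
            (by norm_num) (by simp))
      _ ≤ 2 * √(1 - 2 * a * Real.cos t + a ^ 2) := by linarith
  · refine .of_forall fun t _ => ?_
    have hsqrt : Tendsto (fun a : ℝ => √(1 - 2 * a * Real.cos t + a ^ 2)) (𝓝 0) (𝓝 1) := by
      simpa using
        ((by fun_prop : Continuous fun a : ℝ => √(1 - 2 * a * Real.cos t + a ^ 2)).tendsto 0)
    have hnum := (continuous_im.tendsto _).comp
      ((tendsto_mul_one_sub_ofReal_mul_div_sub_ofReal_cpow (exp_ne_zero (I * t)) ((1:ℂ)/4)).mul
        (tendsto_const_nhds (x := ((exp (I * t) + x) / (x * exp (I * t) + 1)) ^ ((1:ℂ)/2))))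
    have hlim := hnum.div hsqrt one_ne_zero
    rw [one_mul, div_one] at hlim
    exact hlim.mono_left nhdsWithin_le_nhds

theorem stmt_18 (x : ℝ) (hx : x ∈ Set.Ioo (0:ℝ) 1) :
    Filter.Tendsto (fun a : ℝ => ∫ t in (0:ℝ)..Real.pi,
        ((Complex.exp (Complex.I * t) * (1 - a * Complex.exp (Complex.I * t)) /
            (Complex.exp (Complex.I * t) - a)) ^ ((1:ℂ)/4) *
          ((Complex.exp (Complex.I * t) + x) /
            (x * Complex.exp (Complex.I * t) + 1)) ^ ((1:ℂ)/2)).im /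
          Real.sqrt (1 - 2 * a * Real.cos t + a^2))
      (𝓝[>] 0)
      (𝓝 (∫ t in (0:ℝ)..Real.pi,
        (((Complex.exp (Complex.I * t) + x) /
          (x * Complex.exp (Complex.I * t) + 1)) ^ ((1:ℂ)/2)).im)) :=
  stmt_18_general x
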